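/- Let H be a group with trivial center and admitting no surjective group homomorphism onto ℤ, and let φ be an automorphism of H. Then there exists a group homomorphism η from the centralizer C_{Out(H)}([φ]) of [φ] in Out(H) to Out(H_φ) such that: the kernel of η is the cyclic subgroup generated by [φ]; every element in the image of η has a representative ψ ∈ Aut(H_φ) with ψ(ι(H)) = ι(H) and ψ(t) ∈ ι(H)·t; and conversely every element of Out(H_φ) admitting such a representative lies in the image of η. -/

import Mathlib

/-- The mapping torus `H ⋊_φ ℤ` of an automorphism `φ` of `H`: the semidirect
product in which the generator `t` of the `ℤ`-factor acts by
`t · ι(h) · t⁻¹ = ι(φ(h))`. -/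
abbrev MappingTorus (H : Type*) [Group H] (φ : MulAut H) : Type _ :=
  H ⋊[zpowersHom (MulAut H) φ] Multiplicative ℤ

/-- The canonical inclusion `ι : H → H ⋊_φ ℤ`. -/
abbrev MappingTorus.ι {H : Type*} [Group H] (φ : MulAut H) : H →* MappingTorus H φ :=
  SemidirectProduct.inl

/-- The canonical generator `t` of the `ℤ`-factor of `H ⋊_φ ℤ`. -/
abbrev MappingTorus.t {H : Type*} [Group H] (φ : MulAut H) : MappingTorus H φ :=
  SemidirectProduct.inr (Multiplicative.ofAdd 1)

instance innRangeNormal (G : Type*) [Group G] :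
    ((MulAut.conj : G →* MulAut G).range).Normal := by
  constructor
  rintro _ ⟨x, rfl⟩ g
  refine ⟨g x, ?_⟩
  ext h
  simp [MulAut.conj_apply, MulAut.mul_apply, map_mul, map_inv, mul_assoc]

/-- The outer automorphism group: automorphisms modulo inner automorphisms. -/
abbrev Out (G : Type*) [Group G] :=
  MulAut G ⧸ (MulAut.conj : G →* MulAut G).range

/-!
Let `S` be the group of automorphisms of `H ⋊_φ ℤ` inducing the identity on the quotient `ℤ`;
these are exactly the `ψ` with `ψ(ι H) = ι H` and `ψ t ∈ ι(H) t`. If `ψ t = ι(g) t`, the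
restriction `α` of `ψ` to `H` satisfies `α ∘ φ = conj g ∘ φ ∘ α`, so `[α]` commutes with `[φ]`;
conversely every such pair `(α, g)` extends to an element of `S`. As `H` has trivial centre,
`g` is determined by `α`, so restriction embeds `S` into `Aut(H)` with image the preimage of
`C_{Out(H)}([φ])`. Inner automorphisms of `H ⋊_φ ℤ` lie in `S`, and conjugation by `ι(h) tⁿ`
restricts to `conj h ∘ φⁿ`; hence `ψ ∈ S` is inner exactly when `[ψ|_H] ∈ ⟨[φ]⟩`, and
`S → Out(H ⋊_φ ℤ)` factors through `S → C_{Out(H)}([φ])`.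
-/

theorem MulAut.conj_injective_of_center_eq_bot {H : Type*} [Group H] (hZ : Subgroup.center H = ⊥) :
    Function.Injective (MulAut.conj : H →* MulAut H) := by
  refine (injective_iff_map_eq_one _).mpr fun g hg => ?_
  rw [← Subgroup.mem_bot, ← hZ, Subgroup.mem_center_iff]
  exact fun h => (mul_inv_eq_iff_eq_mul.mp (DFunLike.congr_fun hg h)).symm

theorem SemiconjBy.inv_left_conj_mul {H : Type*} [Group H] {α φ : MulAut H} {g : H}
    (hα : SemiconjBy α φ (MulAut.conj g * φ)) :
    SemiconjBy α⁻¹ φ (MulAut.conj (α⁻¹ g⁻¹) * φ) := by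
  ext x
  apply α.injective
  have hx := DFunLike.congr_fun hα.eq (α⁻¹ x)
  simp only [MulAut.mul_apply, MulAut.conj_apply] at hx ⊢
  simp only [map_mul, map_inv, MulAut.apply_inv_self, hx]
  group

theorem MonoidHom.comp_zpow_eq_conj_zpow_comp {K L : Type*} [Group K] [Group L] (f : K →* L)
    {a : MulAut K} {u : L} (h : f.comp a.toMonoidHom = (MulAut.conj u).toMonoidHom.comp f)
    (n : ℤ) : f.comp (a ^ n).toMonoidHom = (MulAut.conj (u ^ n)).toMonoidHom.comp f := by
  have h' (x : K) : f (a x) = u * f x * u⁻¹ := DFunLike.congr_fun h x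
  ext x
  simp only [MonoidHom.comp_apply, MulEquiv.coe_toMonoidHom, MulAut.conj_apply]
  induction n using Int.induction_on generalizing x with
  | zero => simp
  | succ k ih => rw [zpow_add_one, MulAut.mul_apply, ih, h', zpow_add_one]; group
  | pred k ih =>
    have h'' : f (a⁻¹ x) = u⁻¹ * f x * u := by
      rw [← MulAut.apply_inv_self _ a x, h', MulAut.apply_inv_self]; group
    rw [zpow_sub_one, MulAut.mul_apply, ih, h'', zpow_sub_one]; group

theorem Out.mk_conj {G : Type*} [Group G] (u : G) :
    (QuotientGroup.mk (MulAut.conj u) : Out G) = 1 :=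
  (QuotientGroup.eq_one_iff _).mpr ⟨u, rfl⟩

theorem Out.mk_mem_centralizer_iff {G : Type*} [Group G] {α φ : MulAut G} :
    (QuotientGroup.mk α : Out G) ∈ Subgroup.centralizer {(QuotientGroup.mk φ : Out G)} ↔
      ∃ g, SemiconjBy α φ (MulAut.conj g * φ) := by
  rw [Subgroup.mem_centralizer_singleton_iff, ← QuotientGroup.mk_mul, ← QuotientGroup.mk_mul,
    QuotientGroup.eq_iff_div_mem]
  simp only [MonoidHom.mem_range, SemiconjBy, eq_comm (b := _ / _), div_eq_iff_eq_mul, mul_assoc]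

namespace SemidirectProduct

section

variable {N G : Type*} [Group N] [Group G] {φ : G →* MulAut N}

theorem inl_left_eq_self_of_right_eq_one {x : N ⋊[φ] G} (hx : x.right = 1) : inl x.left = x := by
  simpa [hx] using inl_left_mul_inr_right x

variable (φ) in
def autFixingRight : Subgroup (MulAut (N ⋊[φ] G)) where
  carrier := {ψ | ∀ x, (ψ x).right = x.right}
  one_mem' _ := rfl
  mul_mem' hψ hψ' x := (hψ _).trans (hψ' x)
  inv_mem' {ψ} hψ x := by simpa using (hψ (ψ⁻¹ x)).symm

theorem inl_left_apply_inl {ψ : MulAut (N ⋊[φ] G)} (hψ : ψ ∈ autFixingRight φ) (n : N) :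
    inl (ψ (inl n)).left = ψ (inl n) :=
  inl_left_eq_self_of_right_eq_one ((hψ _).trans (right_inl n))

def restrictLeft : autFixingRight φ →* MulAut N where
  toFun ψ :=
    { toFun n := (ψ.1 (inl n)).left
      invFun n := ((ψ⁻¹).1 (inl n)).left
      left_inv n := by
        dsimp only
        rw [inl_left_apply_inl ψ.2, Subgroup.coe_inv, MulAut.inv_apply_self, left_inl]
      right_inv n := by
        dsimp only
        rw [inl_left_apply_inl (ψ⁻¹).2, Subgroup.coe_inv, MulAut.apply_inv_self, left_inl]
      map_mul' a b := by
        rw [map_mul, map_mul, ← inl_left_apply_inl ψ.2 a, ← inl_left_apply_inl ψ.2 b,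
          ← map_mul, left_inl]
        rfl }
  map_one' := rfl
  map_mul' ψ ψ' := by
    ext n
    change (ψ.1 (ψ'.1 (inl n))).left = (ψ.1 (inl (ψ'.1 (inl n)).left)).left
    rw [inl_left_apply_inl ψ'.2]

@[simp]
theorem inl_restrictLeft_apply (ψ : autFixingRight φ) (n : N) :
    inl (restrictLeft ψ n) = ψ.1 (inl n) :=
  inl_left_apply_inl ψ.2 n

end

section

variable {N G : Type*} [Group N] [CommGroup G] {φ : G →* MulAut N}

def conjFixingRight : N ⋊[φ] G →* autFixingRight φ :=
  MulAut.conj.codRestrict _ fun u x => by simp [mul_comm u.right]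

@[simp]
theorem coe_conjFixingRight (u : N ⋊[φ] G) :
    (conjFixingRight u : MulAut (N ⋊[φ] G)) = MulAut.conj u :=
  rfl

@[simp]
theorem restrictLeft_conjFixingRight_inl (n : N) :
    restrictLeft (conjFixingRight (inl n : N ⋊[φ] G)) = MulAut.conj n := by
  ext m
  apply inl_injective (φ := φ)
  simp

@[simp]
theorem restrictLeft_conjFixingRight_inr (g : G) :
    restrictLeft (conjFixingRight (inr g : N ⋊[φ] G)) = φ g := by
  ext m
  apply inl_injective (φ := φ)
  simp [inl_aut]

end

end SemidirectProduct

namespace MappingTorus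

open SemidirectProduct

variable {H : Type*} [Group H] {φ : MulAut H}

theorem t_mul_ι_mul_t_inv (h : H) : t φ * ι φ h * (t φ)⁻¹ = ι φ (φ h) := by
  simp [← map_inv, ← inl_aut]

theorem hom_ext {K : Type*} [Group K] {f f' : MappingTorus H φ →* K}
    (hι : f.comp (ι φ) = f'.comp (ι φ)) (ht : f (t φ) = f' (t φ)) : f = f' :=
  SemidirectProduct.hom_ext hι (MonoidHom.ext_mint ht)

theorem mem_autFixingRight_iff {ψ : MulAut (MappingTorus H φ)} :
    ψ ∈ autFixingRight _ ↔ (ι φ).range.map ψ.toMonoidHom = (ι φ).range ∧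
      ∃ g, ψ (t φ) = ι φ g * t φ := by
  constructor
  · intro hψ
    refine ⟨?_, (ψ (t φ)).left, ?_⟩
    · rw [Subgroup.map_equiv_eq_comap_symm', range_inl_eq_ker_rightHom]
      ext x
      simp only [Subgroup.mem_comap, MonoidHom.mem_ker, rightHom_eq_right]
      exact iff_of_eq (congrArg (· = 1) ((inv_mem hψ) x))
    · nth_rw 1 [← inl_left_mul_inr_right (ψ (t φ)), hψ]
      rfl
  · rintro ⟨hmap, g, hg⟩
    have hright : rightHom.comp ψ.toMonoidHom = rightHom := by
      refine hom_ext (MonoidHom.ext fun h => ?_) (by simp [hg])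
      have hmem : ψ (ι φ h) ∈ (ι φ).range := hmap ▸ Subgroup.mem_map_of_mem _ ⟨h, rfl⟩
      rw [range_inl_eq_ker_rightHom] at hmem
      simpa using hmem
    exact fun x => DFunLike.congr_fun hright x

theorem semiconjBy_restrictLeft {ψ : autFixingRight (zpowersHom (MulAut H) φ)} {g : H}
    (hg : ψ.1 (t φ) = ι φ g * t φ) : SemiconjBy (restrictLeft ψ) φ (MulAut.conj g * φ) := by
  ext h
  apply inl_injective (φ := zpowersHom (MulAut H) φ)
  change ι φ (restrictLeft ψ (φ h)) = ι φ (g * φ (restrictLeft ψ h) * g⁻¹)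
  rw [inl_restrictLeft_apply, ← t_mul_ι_mul_t_inv, map_mul, map_mul, map_inv, hg,
    ← inl_restrictLeft_apply, map_mul, map_mul, ← t_mul_ι_mul_t_inv, map_inv]
  group

theorem restrictLeft_injective (hZ : Subgroup.center H = ⊥) :
    Function.Injective (restrictLeft (φ := zpowersHom (MulAut H) φ)) := by
  intro ψ ψ' h
  obtain ⟨-, g, hg⟩ := mem_autFixingRight_iff.mp ψ.2
  obtain ⟨-, g', hg'⟩ := mem_autFixingRight_iff.mp ψ'.2
  obtain rfl : g = g' := by
    refine MulAut.conj_injective_of_center_eq_bot hZ <|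
      mul_right_cancel (b := φ) <| mul_right_cancel (b := restrictLeft ψ) ?_
    rw [← (semiconjBy_restrictLeft hg).eq, h, (semiconjBy_restrictLeft hg').eq]
  refine Subtype.ext (MulEquiv.toMonoidHom_injective (hom_ext (MonoidHom.ext fun x => ?_) ?_))
  · simp [← inl_restrictLeft_apply, h]
  · simp [hg, hg']

section

variable (α : MulAut H) (g : H) (hα : SemiconjBy α φ (MulAut.conj g * φ))

def homOfSemiconj : MappingTorus H φ →* MappingTorus H φ :=
  lift ((ι φ).comp α.toMonoidHom) (zpowersHom _ (ι φ g * t φ)) fun n => by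
    have hι : (ι φ).comp (MulAut.conj g * φ).toMonoidHom =
        (MulAut.conj (ι φ g * t φ)).toMonoidHom.comp (ι φ) := by
      refine MonoidHom.ext fun x => ?_
      simp [← t_mul_ι_mul_t_inv, mul_assoc]
    refine MonoidHom.ext fun x => ?_
    simp only [MonoidHom.comp_apply, MulEquiv.coe_toMonoidHom, zpowersHom_apply]
    rw [← MulAut.mul_apply, (hα.zpow_right _).eq, MulAut.mul_apply]
    exact DFunLike.congr_fun ((ι φ).comp_zpow_eq_conj_zpow_comp hι _) (α x)

@[simp]
theorem homOfSemiconj_ι (h : H) : homOfSemiconj α g hα (ι φ h) = ι φ (α h) :=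
  lift_inl ..

@[simp]
theorem homOfSemiconj_t : homOfSemiconj α g hα (t φ) = ι φ g * t φ := by
  simp [homOfSemiconj]

def autOfSemiconj : MulAut (MappingTorus H φ) :=
  (homOfSemiconj α g hα).toMulEquiv (homOfSemiconj α⁻¹ (α⁻¹ g⁻¹) hα.inv_left_conj_mul)
    (hom_ext (MonoidHom.ext fun _ => by simp) (by
      rw [MonoidHom.comp_apply, homOfSemiconj_t, map_mul, homOfSemiconj_ι, homOfSemiconj_t,
        ← mul_assoc, ← map_mul]
      simp))
    (hom_ext (MonoidHom.ext fun _ => by simp) (by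
      rw [MonoidHom.comp_apply, homOfSemiconj_t, map_mul, homOfSemiconj_ι, homOfSemiconj_t,
        ← mul_assoc, ← map_mul]
      simp))

@[simp]
theorem coe_autOfSemiconj : ⇑(autOfSemiconj α g hα) = homOfSemiconj α g hα :=
  rfl

theorem autOfSemiconj_mem_autFixingRight : autOfSemiconj α g hα ∈ autFixingRight _ := by
  have hright : rightHom.comp (homOfSemiconj α g hα) = rightHom :=
    hom_ext (MonoidHom.ext fun _ => by simp) (by simp)
  exact fun x => by simpa using DFunLike.congr_fun hright x

theorem restrictLeft_autOfSemiconj :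
    restrictLeft ⟨_, autOfSemiconj_mem_autFixingRight α g hα⟩ = α := by
  ext h
  apply inl_injective (φ := zpowersHom (MulAut H) φ)
  simp

end

variable (φ) in
def restrictToCentralizer : autFixingRight (zpowersHom (MulAut H) φ) →*
    Subgroup.centralizer {(QuotientGroup.mk φ : Out H)} :=
  ((QuotientGroup.mk' _).comp restrictLeft).codRestrict _ fun ψ =>
    have ⟨_, _, hg⟩ := mem_autFixingRight_iff.mp ψ.2
    Out.mk_mem_centralizer_iff.mpr ⟨_, semiconjBy_restrictLeft hg⟩

@[simp]
theorem coe_restrictToCentralizer (ψ : autFixingRight (zpowersHom (MulAut H) φ)) :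
    (restrictToCentralizer φ ψ : Out H) = QuotientGroup.mk (restrictLeft ψ) :=
  rfl

theorem restrictToCentralizer_surjective : Function.Surjective (restrictToCentralizer φ) := by
  rintro ⟨x, hx⟩
  obtain ⟨α, rfl⟩ := QuotientGroup.mk_surjective x
  obtain ⟨g, hα⟩ := Out.mk_mem_centralizer_iff.mp hx
  exact ⟨_, Subtype.ext (congrArg QuotientGroup.mk (restrictLeft_autOfSemiconj α g hα))⟩

theorem mk_eq_one_iff_mk_restrictLeft_mem_zpowers (hZ : Subgroup.center H = ⊥)
    (ψ : autFixingRight (zpowersHom (MulAut H) φ)) :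
    (QuotientGroup.mk ψ.1 : Out (MappingTorus H φ)) = 1 ↔
      (QuotientGroup.mk (restrictLeft ψ) : Out H) ∈ Subgroup.zpowers (QuotientGroup.mk φ) := by
  constructor
  · rw [QuotientGroup.eq_one_iff]
    rintro ⟨u, hu⟩
    obtain rfl : conjFixingRight u = ψ := Subtype.ext hu
    rw [← inl_left_mul_inr_right u, map_mul, map_mul, restrictLeft_conjFixingRight_inl,
      restrictLeft_conjFixingRight_inr, QuotientGroup.mk_mul, Out.mk_conj, one_mul,
      zpowersHom_apply, QuotientGroup.mk_zpow]
    exact Subgroup.zpow_mem_zpowers _ _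
  · rintro ⟨n, hn : (QuotientGroup.mk φ : Out H) ^ n = _⟩
    rw [← QuotientGroup.mk_zpow, QuotientGroup.eq] at hn
    obtain ⟨c, hc⟩ := hn
    obtain rfl : conjFixingRight (inr (Multiplicative.ofAdd n) * ι φ c) = ψ := by
      refine restrictLeft_injective hZ ?_
      rw [map_mul, map_mul, restrictLeft_conjFixingRight_inl, restrictLeft_conjFixingRight_inr,
        hc, zpowersHom_apply, toAdd_ofAdd, mul_inv_cancel_left]
    exact Out.mk_conj _

noncomputable def centralizerToOut (hZ : Subgroup.center H = ⊥) (φ : MulAut H) :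
    Subgroup.centralizer {(QuotientGroup.mk φ : Out H)} →* Out (MappingTorus H φ) :=
  (restrictToCentralizer φ).liftOfSurjective restrictToCentralizer_surjective
    ⟨(QuotientGroup.mk' _).comp (autFixingRight _).subtype, fun ψ hψ =>
      (mk_eq_one_iff_mk_restrictLeft_mem_zpowers hZ ψ).mpr <| by
        rw [← coe_restrictToCentralizer, MonoidHom.mem_ker.mp hψ]
        exact one_mem _⟩

theorem centralizerToOut_restrictToCentralizer (hZ : Subgroup.center H = ⊥)
    (ψ : autFixingRight (zpowersHom (MulAut H) φ)) :
    centralizerToOut hZ φ (restrictToCentralizer φ ψ) = QuotientGroup.mk ψ.1 :=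
  MonoidHom.liftOfRightInverse_comp_apply ..

theorem ker_centralizerToOut (hZ : Subgroup.center H = ⊥) :
    (centralizerToOut hZ φ).ker = (Subgroup.zpowers (QuotientGroup.mk φ : Out H)).subgroupOf
      (Subgroup.centralizer {(QuotientGroup.mk φ : Out H)}) := by
  ext x
  obtain ⟨ψ, rfl⟩ := restrictToCentralizer_surjective x
  rw [MonoidHom.mem_ker, centralizerToOut_restrictToCentralizer, Subgroup.mem_subgroupOf,
    coe_restrictToCentralizer]
  exact mk_eq_one_iff_mk_restrictLeft_mem_zpowers hZ ψ

theorem mem_range_centralizerToOut_iff (hZ : Subgroup.center H = ⊥)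
    {x : Out (MappingTorus H φ)} :
    x ∈ (centralizerToOut hZ φ).range ↔
      ∃ ψ : MulAut (MappingTorus H φ), QuotientGroup.mk ψ = x ∧ ψ ∈ autFixingRight _ := by
  constructor
  · rintro ⟨y, rfl⟩
    obtain ⟨ψ, rfl⟩ := restrictToCentralizer_surjective y
    exact ⟨ψ.1, (centralizerToOut_restrictToCentralizer hZ ψ).symm, ψ.2⟩
  · rintro ⟨ψ, rfl, hψ⟩
    exact ⟨restrictToCentralizer φ ⟨ψ, hψ⟩, centralizerToOut_restrictToCentralizer hZ _⟩

end MappingTorus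

theorem exists_eta_centralizer_to_out_general (H : Type*) [Group H]
    (hZ : Subgroup.center H = ⊥)
    (φ : MulAut H) :
    ∃ η : Subgroup.centralizer ({(QuotientGroup.mk φ : Out H)} : Set (Out H)) →*
        Out (MappingTorus H φ),
      η.ker = (Subgroup.zpowers (QuotientGroup.mk φ : Out H)).subgroupOf
          (Subgroup.centralizer ({(QuotientGroup.mk φ : Out H)} : Set (Out H))) ∧
      ∀ x : Out (MappingTorus H φ),
        x ∈ η.range ↔ ∃ ψ : MulAut (MappingTorus H φ),
          (QuotientGroup.mk ψ : Out (MappingTorus H φ)) = x ∧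
          Subgroup.map ψ.toMonoidHom (MappingTorus.ι φ).range = (MappingTorus.ι φ).range ∧
          ∃ g : H, ψ (MappingTorus.t φ) = MappingTorus.ι φ g * MappingTorus.t φ := by
  refine ⟨MappingTorus.centralizerToOut hZ φ, MappingTorus.ker_centralizerToOut hZ,
    fun x => ?_⟩
  simp only [MappingTorus.mem_range_centralizerToOut_iff, MappingTorus.mem_autFixingRight_iff]

theorem exists_eta_centralizer_to_out (H : Type*) [Group H]
    (hZ : Subgroup.center H = ⊥)
    (hH : ∀ f : H →* Multiplicative ℤ, ¬ Function.Surjective f)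
    (φ : MulAut H) :
    ∃ η : Subgroup.centralizer ({(QuotientGroup.mk φ : Out H)} : Set (Out H)) →*
        Out (MappingTorus H φ),
      η.ker = (Subgroup.zpowers (QuotientGroup.mk φ : Out H)).subgroupOf
          (Subgroup.centralizer ({(QuotientGroup.mk φ : Out H)} : Set (Out H))) ∧
      ∀ x : Out (MappingTorus H φ),
        x ∈ η.range ↔ ∃ ψ : MulAut (MappingTorus H φ),
          (QuotientGroup.mk ψ : Out (MappingTorus H φ)) = x ∧
          Subgroup.map ψ.toMonoidHom (MappingTorus.ι φ).range = (MappingTorus.ι φ).range ∧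
          ∃ g : H, ψ (MappingTorus.t φ) = MappingTorus.ι φ g * MappingTorus.t φ :=
  exists_eta_centralizer_to_out_general H hZ φ
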